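/- The polynomial $\phi(x) = x^2 - x + 11$ is irreducible modulo $2$, modulo $3$, and modulo $5$, and the polynomial $\frac{1}{15}\phi(x)^4 + 2\phi(x)^2 + 15$ is reducible over $\mathbb{Q}$. -/

import Mathlib

open Polynomial

/-- `u j` is the product of all odd positive integers `≤ j`. -/
def u (j : ℕ) : ℕ := ∏ i ∈ Finset.filter (fun i => Odd i) (Finset.range (j+1)), i

lemma map_X_sq_sub_X_add_C {R : Type*} [Ring R] (f : ℤ →+* R) (a : ℤ) :
    (X ^ 2 - X + C a : ℤ[X]).map f = X ^ 2 - X + C (f a) := by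
  simp only [Polynomial.map_add, Polynomial.map_sub, Polynomial.map_pow, map_X, map_C]

lemma irreducible_X_sq_sub_X_add_C {K : Type*} [Field K] (a : K)
    (h : ∀ x : K, x ^ 2 - x + a ≠ 0) : Irreducible (X ^ 2 - X + C a) := by
  have hdeg : (X ^ 2 - X + C a : K[X]).natDegree = 2 := by compute_degree!
  refine irreducible_of_degree_le_three_of_not_isRoot (by simp [hdeg]) fun x hx => h x ?_
  simpa using hx

lemma not_irreducible_C_inv_mul_pow_four_add {K : Type*} [Field K] (φ : K[X]) {c : K}
    (hc : c ≠ 0) : ¬ Irreducible (C c⁻¹ * φ ^ 4 + C 2 * φ ^ 2 + C c) := by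
  have hsq : C c⁻¹ * φ ^ 4 + C 2 * φ ^ 2 + C c = C c⁻¹ * (φ ^ 2 + C c) ^ 2 := by
    have hinv : C c⁻¹ * C c = 1 := by rw [← C_mul, inv_mul_cancel₀ hc, C_1]
    rw [show (C 2 : K[X]) = 2 from map_ofNat C 2]
    linear_combination (-(2 * φ ^ 2) - C c) * hinv
  rw [hsq, irreducible_isUnit_mul (isUnit_C.mpr (inv_ne_zero hc).isUnit)]
  exact not_irreducible_pow (by norm_num)

theorem stmt_8 :
    Irreducible ((X^2 - X + C 11 : ℤ[X]).map (Int.castRingHom (ZMod 2))) ∧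
    Irreducible ((X^2 - X + C 11 : ℤ[X]).map (Int.castRingHom (ZMod 3))) ∧
    Irreducible ((X^2 - X + C 11 : ℤ[X]).map (Int.castRingHom (ZMod 5))) ∧
    ¬ Irreducible (C (15:ℚ)⁻¹ * ((X^2 - X + C 11 : ℤ[X]).map (Int.castRingHom ℚ))^4
        + C 2 * ((X^2 - X + C 11 : ℤ[X]).map (Int.castRingHom ℚ))^2 + C 15) := by
  have : Fact (Nat.Prime 5) := ⟨Nat.prime_five⟩
  simp only [map_X_sq_sub_X_add_C]
  exact ⟨irreducible_X_sq_sub_X_add_C _ (by decide), irreducible_X_sq_sub_X_add_C _ (by decide),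
    irreducible_X_sq_sub_X_add_C _ (by decide +revert),
    not_irreducible_C_inv_mul_pow_four_add _ (by norm_num)⟩
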